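/- Let R be a right po-coherent po-ring and let A be a partially ordered right R-module. Then the following are equivalent: (i) A is finitely po-presented; (ii) A is finitely related; (iii) A is a finitely presented right R-module and A⁺ = {a ∈ A | 0 ≤ a} is a finitely generated right R⁺-semimodule. -/

import Mathlib

/-- A *po-ring*: a ring equipped with a partial order such that addition is
translation-invariant, multiplication by nonnegative elements (on either side) is monotone,
the ring is directed (every element is a difference of two nonnegative elements),
and `0 ≤ 1`. -/
class PORing (R : Type*) extends Ring R, PartialOrder R where
  add_le_add_right' : ∀ a b : R, a ≤ b → ∀ c : R, a + c ≤ b + c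
  mul_le_mul_of_nonneg_right' : ∀ a b c : R, a ≤ b → 0 ≤ c → a * c ≤ b * c
  mul_le_mul_of_nonneg_left' : ∀ a b c : R, a ≤ b → 0 ≤ c → c * a ≤ c * b
  directed' : ∀ x : R, ∃ y z : R, 0 ≤ y ∧ 0 ≤ z ∧ x = y - z
  zero_le_one' : (0 : R) ≤ 1

/-- A *partially ordered right module* over a po-ring `R`: an additive abelian group with a
right `R`-action `rsmul` (written on the right, so `rsmul a ξ` is `aξ`), with the usual
right-module axioms, such that addition is translation-invariant and
`0 ≤ a`, `0 ≤ ξ` imply `0 ≤ aξ`. -/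
class PORightModule (R : Type*) [PORing R] (A : Type*) [AddCommGroup A] [PartialOrder A] where
  rsmul : A → R → A
  add_rsmul : ∀ (a b : A) (r : R), rsmul (a + b) r = rsmul a r + rsmul b r
  rsmul_add : ∀ (a : A) (r s : R), rsmul a (r + s) = rsmul a r + rsmul a s
  rsmul_mul : ∀ (a : A) (r s : R), rsmul a (r * s) = rsmul (rsmul a r) s
  rsmul_one : ∀ a : A, rsmul a 1 = a
  add_le_add_right' : ∀ a b : A, a ≤ b → ∀ c : A, a + c ≤ b + c
  rsmul_nonneg : ∀ (a : A) (r : R), 0 ≤ a → 0 ≤ r → 0 ≤ rsmul a r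

open PORightModule

/-- A po-ring is a partially ordered right module over itself. -/
instance PORing.toPORightModule (R : Type*) [PORing R] : PORightModule R R where
  rsmul := (· * ·)
  add_rsmul := add_mul
  rsmul_add := mul_add
  rsmul_mul a r s := (mul_assoc a r s).symm
  rsmul_one := mul_one
  add_le_add_right' := PORing.add_le_add_right'
  rsmul_nonneg a r ha hr := by
    have h := PORing.mul_le_mul_of_nonneg_right' 0 a r ha hr
    simpa using h

/-- Products of partially ordered right modules, ordered coordinatewise. -/
instance Pi.instPORightModule {R : Type*} [PORing R] {ι : Type*} {A : ι → Type*}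
    [∀ i, AddCommGroup (A i)] [∀ i, PartialOrder (A i)] [∀ i, PORightModule R (A i)] :
    PORightModule R (∀ i, A i) where
  rsmul x r i := rsmul (x i) r
  add_rsmul a b r := funext fun i => add_rsmul (a i) (b i) r
  rsmul_add a r s := funext fun i => rsmul_add (a i) r s
  rsmul_mul a r s := funext fun i => rsmul_mul (a i) r s
  rsmul_one a := funext fun i => rsmul_one (a i)
  add_le_add_right' a b h c := by
    intro i
    exact PORightModule.add_le_add_right' R (a i) (b i) (h i) (c i)
  rsmul_nonneg a r ha hr := by
    intro i
    exact PORightModule.rsmul_nonneg (a i) r (ha i) hr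

/-- Binary products of partially ordered right modules, ordered coordinatewise. -/
instance Prod.instPORightModule {R : Type*} [PORing R] {A B : Type*}
    [AddCommGroup A] [PartialOrder A] [PORightModule R A]
    [AddCommGroup B] [PartialOrder B] [PORightModule R B] :
    PORightModule R (A × B) where
  rsmul x r := (rsmul x.1 r, rsmul x.2 r)
  add_rsmul a b r := by
    refine Prod.ext ?_ ?_ <;> simp [PORightModule.add_rsmul]
  rsmul_add a r s := by
    refine Prod.ext ?_ ?_ <;> simp [PORightModule.rsmul_add]
  rsmul_mul a r s := by
    refine Prod.ext ?_ ?_ <;> simp [PORightModule.rsmul_mul]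
  rsmul_one a := by
    refine Prod.ext ?_ ?_ <;> simp [PORightModule.rsmul_one]
  add_le_add_right' a b h c := by
    rw [Prod.le_def] at h ⊢
    constructor
    · simpa using PORightModule.add_le_add_right' R a.1 b.1 h.1 c.1
    · simpa using PORightModule.add_le_add_right' R a.2 b.2 h.2 c.2
  rsmul_nonneg a r ha hr := by
    rw [Prod.le_def] at ha ⊢
    constructor
    · simpa using PORightModule.rsmul_nonneg a.1 r (by simpa using ha.1) hr
    · simpa using PORightModule.rsmul_nonneg a.2 r (by simpa using ha.2) hr

section Defs

variable (R : Type*) [PORing R]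

/-- The product `UX = a₁ξ₁ + ⋯ + aₙξₙ` of a row matrix `U = (a₁,…,aₙ)` with entries in `A`
and a column matrix `X = (ξ₁,…,ξₙ)ᵗ` with entries in `R`. -/
def rowMul {A : Type*} [AddCommGroup A] [PartialOrder A] [PORightModule R A]
    {n : ℕ} (U : Fin n → A) (X : Fin n → R) : A :=
  ∑ i, rsmul (U i) (X i)

/-- A subset `S` of a partially ordered right `R`-module is a *finitely generated
`R⁺`-subsemimodule* if it is the set of all `R⁺`-linear combinations of some finite subset. -/
def IsFGConeIn {A : Type*} [AddCommGroup A] [PartialOrder A] [PORightModule R A]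
    (S : Set A) : Prop :=
  ∃ (k : ℕ) (g : Fin k → A),
    S = { a | ∃ Y : Fin k → R, (∀ i, 0 ≤ Y i) ∧ a = rowMul R g Y }

/-- `A` is *finitely related at* the row matrix `U ∈ M_{1,n}(A)` if the solution set of the
mixed system `UX ≥ 0, X ≥ 0` is a finitely generated `R⁺`-subsemimodule of `M_{n,1}(R)`. -/
def FinitelyRelatedAt {A : Type*} [AddCommGroup A] [PartialOrder A] [PORightModule R A]
    {n : ℕ} (U : Fin n → A) : Prop :=
  IsFGConeIn R {X : Fin n → R | 0 ≤ rowMul R U X ∧ ∀ i, 0 ≤ X i}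

/-- `A` is *finitely po-presented at* the row matrix `U ∈ M_{1,n}(A)` if the solution set of
the system `UX ≥ 0` is a finitely generated `R⁺`-subsemimodule of `M_{n,1}(R)`. -/
def FinitelyPoPresentedAt {A : Type*} [AddCommGroup A] [PartialOrder A] [PORightModule R A]
    {n : ℕ} (U : Fin n → A) : Prop :=
  IsFGConeIn R {X : Fin n → R | 0 ≤ rowMul R U X}

/-- A row matrix `U` is *spanning* if its entries generate `A` as a right `R`-module, i.e.
every element of `A` is an `R`-linear combination `UX` of the entries. -/
def SpanningRow {A : Type*} [AddCommGroup A] [PartialOrder A] [PORightModule R A]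
    {n : ℕ} (U : Fin n → A) : Prop :=
  ∀ a : A, ∃ X : Fin n → R, a = rowMul R U X

variable (A : Type*) [AddCommGroup A] [PartialOrder A] [PORightModule R A]

/-- `A` is *finitely po-presented* if it is finitely po-presented at some spanning row
matrix. -/
def FinitelyPoPresented : Prop :=
  ∃ (n : ℕ) (U : Fin n → A), SpanningRow R U ∧ FinitelyPoPresentedAt R U

/-- `A` is *finitely related* if it is a finitely generated right `R`-module and is finitely
related at every spanning row matrix. -/
def FinitelyRelatedMod : Prop :=
  (∃ (n : ℕ) (U : Fin n → A), SpanningRow R U) ∧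
    ∀ (n : ℕ) (U : Fin n → A), SpanningRow R U → FinitelyRelatedAt R U

/-- `A` is *po-coherent* if it is finitely related at every row matrix of elements of `A`. -/
def PoCoherent : Prop :=
  ∀ (n : ℕ) (U : Fin n → A), FinitelyRelatedAt R U

end Defs

/-- A po-ring is *right po-coherent* if it is po-coherent as a partially ordered right module
over itself. -/
def RightPoCoherent (R : Type*) [PORing R] : Prop :=
  PoCoherent R R

/-- `A` is a *finitely presented* right `R`-module: it has a finite spanning row whose module
of relations (the solution set of `UX = 0`) is a finitely generated right `R`-submodule of
`M_{n,1}(R)`. -/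
def FinitelyPresentedModule (R A : Type*) [PORing R] [AddCommGroup A] [PartialOrder A]
    [PORightModule R A] : Prop :=
  ∃ (n : ℕ) (U : Fin n → A), SpanningRow R U ∧
    ∃ (k : ℕ) (g : Fin k → (Fin n → R)),
      {X : Fin n → R | rowMul R U X = 0} = {X | ∃ Y : Fin k → R, X = rowMul R g Y}

/-!
Over a right po-coherent po-ring, finitely generated `R⁺`-cones are stable under right-linear
images, finite products, and cutting out a condition `d x ∈ K` with `d` right-linear and `K` a
finitely generated cone of columns: writing the cones through generators, that condition becomes
finitely many scalar equations on nonnegative coefficients, each of which po-coherence handles.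
With this calculus, (ii) ⇒ (i) by doubling a spanning row `U` to `(U, -U)`; (i) ⇒ (iii) because
`A⁺` is the image of `{X | UX ≥ 0}` and the relations of `U` are the `X` with `X` and `-X` in
that cone; and (iii) makes `A` po-coherent, which gives (ii).
-/

instance PORing.toIsOrderedAddMonoid (R : Type*) [PORing R] : IsOrderedAddMonoid R where
  add_le_add_left := PORing.add_le_add_right'

theorem PORightModule.isOrderedAddMonoid (R M : Type*) [PORing R] [AddCommGroup M]
    [PartialOrder M] [PORightModule R M] : IsOrderedAddMonoid M where
  add_le_add_left := PORightModule.add_le_add_right' R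

namespace PORightModule

variable {R : Type*} [PORing R] {M : Type*} [AddCommGroup M] [PartialOrder M] [PORightModule R M]

variable (M) in
def rsmulAddHom (r : R) : M →+ M :=
  AddMonoidHom.mk' (rsmul · r) (add_rsmul · · r)

theorem zero_rsmul (r : R) : rsmul (0 : M) r = 0 :=
  (rsmulAddHom M r).map_zero

theorem neg_rsmul (a : M) (r : R) : rsmul (-a) r = -rsmul a r :=
  (rsmulAddHom M r).map_neg a

theorem rsmul_neg (a : M) (r : R) : rsmul a (-r) = -rsmul a r :=
  (AddMonoidHom.mk' (rsmul a) (rsmul_add a)).map_neg r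

end PORightModule

section RowMul

variable {R : Type*} [PORing R] {M : Type*} [AddCommGroup M] [PartialOrder M] [PORightModule R M]
  {n : ℕ}

theorem rowMul_add (U : Fin n → M) (X Y : Fin n → R) :
    rowMul R U (X + Y) = rowMul R U X + rowMul R U Y := by
  simp only [rowMul, Pi.add_apply, rsmul_add, Finset.sum_add_distrib]

theorem rowMul_neg (U : Fin n → M) (X : Fin n → R) : rowMul R U (-X) = -rowMul R U X := by
  simp only [rowMul, Pi.neg_apply, rsmul_neg, Finset.sum_neg_distrib]

theorem rowMul_sub (U : Fin n → M) (X Y : Fin n → R) :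
    rowMul R U (X - Y) = rowMul R U X - rowMul R U Y := by
  rw [sub_eq_add_neg, rowMul_add, rowMul_neg, sub_eq_add_neg]

theorem neg_rowMul (U : Fin n → M) (X : Fin n → R) : rowMul R (-U) X = -rowMul R U X := by
  simp only [rowMul, Pi.neg_apply, neg_rsmul, Finset.sum_neg_distrib]

theorem zero_rowMul (X : Fin n → R) : rowMul R (0 : Fin n → M) X = 0 := by
  simp only [rowMul, Pi.zero_apply, zero_rsmul, Finset.sum_const_zero]

theorem rowMul_rsmul (U : Fin n → M) (X : Fin n → R) (r : R) :
    rowMul R U (rsmul X r) = rsmul (rowMul R U X) r := by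
  change _ = rsmulAddHom M r (∑ i, rsmul (U i) (X i))
  rw [map_sum]
  exact Finset.sum_congr rfl fun i _ => rsmul_mul (U i) (X i) r

theorem append_rowMul {m : ℕ} (U : Fin n → M) (V : Fin m → M) (X : Fin (n + m) → R) :
    rowMul R (Fin.append U V) X =
      rowMul R U (fun i => X (Fin.castAdd m i)) + rowMul R V (fun i => X (Fin.natAdd n i)) := by
  simp only [rowMul, Fin.sum_univ_add, Fin.append_left, Fin.append_right]

theorem rowMul_piSingle_one (X : Fin n → R) : rowMul R (fun i => Pi.single i 1) X = X := by
  conv_rhs => rw [← Finset.univ_sum_single X]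
  refine Finset.sum_congr rfl fun i _ => funext fun j => ?_
  show (Pi.single i (1 : R) : Fin n → R) j * X i = (Pi.single i (X i) : Fin n → R) j
  rcases eq_or_ne j i with rfl | h
  · simp
  · simp [h]

end RowMul

structure IsRightLinear (R : Type*) [PORing R] {M N : Type*} [AddCommGroup M] [PartialOrder M]
    [PORightModule R M] [AddCommGroup N] [PartialOrder N] [PORightModule R N] (φ : M → N) :
    Prop where
  map_add : ∀ x y, φ (x + y) = φ x + φ y
  map_rsmul : ∀ x (r : R), φ (rsmul x r) = rsmul (φ x) r

namespace IsRightLinear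

variable {R : Type*} [PORing R] {M N P : Type*} [AddCommGroup M] [PartialOrder M]
  [PORightModule R M] [AddCommGroup N] [PartialOrder N] [PORightModule R N]
  [AddCommGroup P] [PartialOrder P] [PORightModule R P] {φ ψ : M → N}

theorem id : IsRightLinear R (fun x : M => x) := ⟨fun _ _ => rfl, fun _ _ => rfl⟩

theorem fst : IsRightLinear R (Prod.fst : M × N → M) := ⟨fun _ _ => rfl, fun _ _ => rfl⟩

theorem snd : IsRightLinear R (Prod.snd : M × N → N) := ⟨fun _ _ => rfl, fun _ _ => rfl⟩

theorem comp {χ : N → P} (hχ : IsRightLinear R χ) (hφ : IsRightLinear R φ) :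
    IsRightLinear R (χ ∘ φ) :=
  ⟨fun x y => by simp only [Function.comp, hφ.map_add, hχ.map_add],
    fun x r => by simp only [Function.comp, hφ.map_rsmul, hχ.map_rsmul]⟩

theorem neg (hφ : IsRightLinear R φ) : IsRightLinear R (fun x => -φ x) :=
  ⟨fun x y => by rw [hφ.map_add, neg_add], fun x r => by rw [hφ.map_rsmul, neg_rsmul]⟩

theorem sub (hφ : IsRightLinear R φ) (hψ : IsRightLinear R ψ) :
    IsRightLinear R (fun x => φ x - ψ x) :=
  ⟨fun x y => by rw [hφ.map_add, hψ.map_add]; abel,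
    fun x r => by
      rw [hφ.map_rsmul, hψ.map_rsmul, sub_eq_add_neg, sub_eq_add_neg, add_rsmul, neg_rsmul]⟩

theorem apply {ι : Type*} {φ : M → ι → N} (hφ : IsRightLinear R φ) (i : ι) :
    IsRightLinear R (fun x => φ x i) :=
  ⟨fun x y => congrFun (hφ.map_add x y) i, fun x r => congrFun (hφ.map_rsmul x r) i⟩

theorem map_rowMul (hφ : IsRightLinear R φ) {k : ℕ} (g : Fin k → M) (Y : Fin k → R) :
    φ (rowMul R g Y) = rowMul R (fun j => φ (g j)) Y := by
  change AddMonoidHom.mk' φ hφ.map_add (∑ j, rsmul (g j) (Y j)) = _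
  simp only [map_sum, AddMonoidHom.mk'_apply, hφ.map_rsmul, rowMul]

end IsRightLinear

section RowMulLinear

variable {R : Type*} [PORing R] {M : Type*} [AddCommGroup M] [PartialOrder M] [PORightModule R M]
  {n : ℕ}

theorem isRightLinear_rowMul (U : Fin n → M) : IsRightLinear R (rowMul R U) :=
  ⟨rowMul_add U, rowMul_rsmul U⟩

theorem rowMul_rowMul {k : ℕ} (U : Fin n → M) (g : Fin k → Fin n → R) (Y : Fin k → R) :
    rowMul R U (rowMul R g Y) = rowMul R (fun j => rowMul R U (g j)) Y :=
  (isRightLinear_rowMul U).map_rowMul g Y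

end RowMulLinear

section Halves

variable {R : Type*} [PORing R] {M : Type*} [AddCommGroup M] [PartialOrder M] [PORightModule R M]
  {n : ℕ}

def diffHalves (Z : Fin (n + n) → R) : Fin n → R :=
  fun i => Z (Fin.castAdd n i) - Z (Fin.natAdd n i)

theorem isRightLinear_diffHalves : IsRightLinear R (diffHalves (R := R) (n := n)) :=
  ⟨fun x y => funext fun i => by simp only [diffHalves, Pi.add_apply]; abel,
    fun x r => funext fun i => sub_mul _ _ r |>.symm⟩

theorem append_neg_rowMul (U : Fin n → M) (Z : Fin (n + n) → R) :
    rowMul R (Fin.append U (-U)) Z = rowMul R U (diffHalves Z) := by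
  rw [append_rowMul, neg_rowMul, ← sub_eq_add_neg, ← rowMul_sub]
  rfl

theorem append_nonneg {m : ℕ} {P : Fin n → R} {Q : Fin m → R} (hP : ∀ i, 0 ≤ P i)
    (hQ : ∀ i, 0 ≤ Q i) : ∀ i, 0 ≤ Fin.append P Q i :=
  Fin.addCases (fun i => by simpa only [Fin.append_left] using hP i)
    (fun i => by simpa only [Fin.append_right] using hQ i)

theorem exists_nonneg_sub_eq (X : Fin n → R) :
    ∃ P Q : Fin n → R, (∀ i, 0 ≤ P i) ∧ (∀ i, 0 ≤ Q i) ∧ X = P - Q := by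
  choose P Q hP hQ hX using fun i => PORing.directed' (X i)
  exact ⟨P, Q, hP, hQ, funext hX⟩

theorem exists_nonneg_diffHalves_eq (X : Fin n → R) :
    ∃ Z : Fin (n + n) → R, (∀ i, 0 ≤ Z i) ∧ diffHalves Z = X := by
  obtain ⟨P, Q, hP, hQ, rfl⟩ := exists_nonneg_sub_eq X
  refine ⟨Fin.append P Q, append_nonneg hP hQ, funext fun i => ?_⟩
  simp only [diffHalves, Fin.append_left, Fin.append_right, Pi.sub_apply]

end Halves

section Cone

variable {R : Type*} [PORing R] {M N : Type*} [AddCommGroup M] [PartialOrder M]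
  [PORightModule R M] [AddCommGroup N] [PartialOrder N] [PORightModule R N]

theorem isFGConeIn_orthant (n : ℕ) : IsFGConeIn R {X : Fin n → R | ∀ i, 0 ≤ X i} :=
  ⟨n, fun i => Pi.single i 1, by simp only [rowMul_piSingle_one, exists_eq_right']⟩

theorem isFGConeIn_span {k : ℕ} (g : Fin k → M) :
    IsFGConeIn R {x | ∃ Y : Fin k → R, x = rowMul R g Y} := by
  refine ⟨k + k, Fin.append g (-g), Set.ext fun x => ⟨?_, ?_⟩⟩
  · rintro ⟨Y, rfl⟩
    obtain ⟨Z, hZ, rfl⟩ := exists_nonneg_diffHalves_eq Y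
    exact ⟨Z, hZ, (append_neg_rowMul g Z).symm⟩
  · rintro ⟨Z, -, rfl⟩
    exact ⟨diffHalves Z, append_neg_rowMul g Z⟩

theorem IsFGConeIn.exists_eq_span {S : Set M} (hS : IsFGConeIn R S)
    (hneg : ∀ x ∈ S, -x ∈ S) :
    ∃ (k : ℕ) (g : Fin k → M), S = {x | ∃ Y : Fin k → R, x = rowMul R g Y} := by
  obtain ⟨k, g, rfl⟩ := hS
  refine ⟨k, g, Set.ext fun x => ⟨fun ⟨Y, _, hx⟩ => ⟨Y, hx⟩, ?_⟩⟩
  rintro ⟨Y, rfl⟩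
  obtain ⟨P, Q, hP, hQ, rfl⟩ := exists_nonneg_sub_eq Y
  obtain ⟨Q', hQ', hQQ'⟩ := hneg _ ⟨Q, hQ, rfl⟩
  -- `-(g Q) = g Q'` with `Q' ≥ 0`, so `g (P - Q) = g (P + Q')`
  refine ⟨P + Q', fun i => add_nonneg (hP i) (hQ' i), ?_⟩
  rw [rowMul_sub, rowMul_add, ← hQQ', sub_eq_add_neg]

theorem IsFGConeIn.image {S : Set M} (hS : IsFGConeIn R S) {φ : M → N}
    (hφ : IsRightLinear R φ) : IsFGConeIn R (φ '' S) := by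
  obtain ⟨k, g, rfl⟩ := hS
  refine ⟨k, fun j => φ (g j), Set.ext fun y => ⟨?_, ?_⟩⟩
  · rintro ⟨_, ⟨Y, hY, rfl⟩, rfl⟩
    exact ⟨Y, hY, hφ.map_rowMul g Y⟩
  · rintro ⟨Y, hY, rfl⟩
    exact ⟨rowMul R g Y, ⟨Y, hY, rfl⟩, hφ.map_rowMul g Y⟩

theorem IsFGConeIn.prod {S : Set M} {T : Set N} (hS : IsFGConeIn R S) (hT : IsFGConeIn R T) :
    IsFGConeIn R (S ×ˢ T) := by
  obtain ⟨k, g, rfl⟩ := hS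
  obtain ⟨l, h, rfl⟩ := hT
  have hrow : ∀ Z : Fin (k + l) → R,
      rowMul R (Fin.append (fun i => (g i, 0)) (fun j => (0, h j))) Z =
        (rowMul R g (fun i => Z (Fin.castAdd l i)), rowMul R h (fun j => Z (Fin.natAdd k j))) := by
    intro Z
    rw [append_rowMul]
    refine Prod.ext ?_ ?_
    · simp only [Prod.fst_add, IsRightLinear.fst.map_rowMul]
      exact add_eq_left.mpr (zero_rowMul _)
    · simp only [Prod.snd_add, IsRightLinear.snd.map_rowMul]
      exact add_eq_right.mpr (zero_rowMul _)
  refine ⟨k + l, Fin.append (fun i => (g i, 0)) (fun j => (0, h j)), Set.ext fun x => ⟨?_, ?_⟩⟩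
  · rintro ⟨⟨Y, hY, hx₁⟩, ⟨T, hT, hx₂⟩⟩
    refine ⟨Fin.append Y T, append_nonneg hY hT, ?_⟩
    rw [hrow]
    exact Prod.ext (by simpa only [Fin.append_left]) (by simpa only [Fin.append_right])
  · rintro ⟨Z, hZ, rfl⟩
    rw [hrow]
    exact ⟨⟨_, fun i => hZ _, rfl⟩, ⟨_, fun j => hZ _, rfl⟩⟩

end Cone

namespace IsFGConeIn

variable {R : Type*} [PORing R] {M : Type*} [AddCommGroup M] [PartialOrder M]
  [PORightModule R M] {S : Set M}

theorem sep_nonneg (hR : RightPoCoherent R) (hS : IsFGConeIn R S) {c : M → R}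
    (hc : IsRightLinear R c) : IsFGConeIn R {x ∈ S | 0 ≤ c x} := by
  obtain ⟨q, h, rfl⟩ := hS
  have hset : {x ∈ {a | ∃ Y : Fin q → R, (∀ i, 0 ≤ Y i) ∧ a = rowMul R h Y} | 0 ≤ c x} =
      rowMul R h '' {Y | 0 ≤ rowMul R (fun j => c (h j)) Y ∧ ∀ i, 0 ≤ Y i} := by
    ext x
    constructor
    · rintro ⟨⟨Y, hY, rfl⟩, hcY⟩
      exact ⟨Y, ⟨hc.map_rowMul h Y ▸ hcY, hY⟩, rfl⟩
    · rintro ⟨Y, ⟨hcY, hY⟩, rfl⟩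
      exact ⟨⟨Y, hY, rfl⟩, (hc.map_rowMul h Y).symm ▸ hcY⟩
  rw [hset]
  exact (hR q _).image (isRightLinear_rowMul h)

theorem sep_eq_zero (hR : RightPoCoherent R) (hS : IsFGConeIn R S) {c : M → R}
    (hc : IsRightLinear R c) : IsFGConeIn R {x ∈ S | c x = 0} := by
  have hset : {x ∈ {x ∈ S | 0 ≤ c x} | 0 ≤ -c x} = {x ∈ S | c x = 0} := by
    ext x
    simp only [Set.mem_ofPred_eq, neg_nonneg, le_antisymm_iff (a := c x)]
    tauto
  exact hset ▸ (hS.sep_nonneg hR hc).sep_nonneg hR hc.neg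

theorem sep_forall_eq_zero (hR : RightPoCoherent R) {n : ℕ} (hS : IsFGConeIn R S)
    {c : Fin n → M → R} (hc : ∀ i, IsRightLinear R (c i)) :
    IsFGConeIn R {x ∈ S | ∀ i, c i x = 0} := by
  induction n generalizing S with
  | zero => simpa only [IsEmpty.forall_iff, Set.sep_true] using hS
  | succ n ih =>
    have hset : {x ∈ {x ∈ S | c 0 x = 0} | ∀ i : Fin n, c i.succ x = 0} =
        {x ∈ S | ∀ i, c i x = 0} := by
      ext x
      simp only [Set.mem_ofPred_eq, Fin.forall_fin_succ, and_assoc]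
    exact hset ▸ ih (hS.sep_eq_zero hR (hc 0)) (fun i => hc i.succ)

theorem sep_mem (hR : RightPoCoherent R) (hS : IsFGConeIn R S) {n : ℕ} {K : Set (Fin n → R)}
    (hK : IsFGConeIn R K) {d : M → Fin n → R} (hd : IsRightLinear R d) :
    IsFGConeIn R {x ∈ S | d x ∈ K} := by
  have hset : Prod.fst '' {p ∈ S ×ˢ K | ∀ i, d p.1 i - p.2 i = 0} = {x ∈ S | d x ∈ K} := by
    ext x
    simp only [sub_eq_zero, ← funext_iff]
    constructor
    · rintro ⟨⟨x, y⟩, ⟨⟨hx, hy⟩, hxy⟩, rfl⟩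
      exact ⟨hx, hxy ▸ hy⟩
    · rintro ⟨hx, hdx⟩
      exact ⟨(x, d x), ⟨⟨hx, hdx⟩, rfl⟩, rfl⟩
  refine hset ▸ ((hS.prod hK).sep_forall_eq_zero hR fun i => ?_).image IsRightLinear.fst
  exact ((hd.comp IsRightLinear.fst).sub IsRightLinear.snd).apply i

end IsFGConeIn

section Presentations

variable {R : Type*} [PORing R] {A : Type*} [AddCommGroup A] [PartialOrder A]
  [PORightModule R A] {n : ℕ} {U : Fin n → A}

theorem SpanningRow.append_neg (hU : SpanningRow R U) : SpanningRow R (Fin.append U (-U)) := by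
  intro a
  obtain ⟨X, rfl⟩ := hU a
  obtain ⟨Z, -, rfl⟩ := exists_nonneg_diffHalves_eq X
  exact ⟨Z, (append_neg_rowMul U Z).symm⟩

theorem FinitelyRelatedAt.finitelyPoPresentedAt_of_append_neg
    (h : FinitelyRelatedAt R (Fin.append U (-U))) : FinitelyPoPresentedAt R U := by
  have hset : diffHalves '' {Z | 0 ≤ rowMul R (Fin.append U (-U)) Z ∧ ∀ i, 0 ≤ Z i} =
      {X | 0 ≤ rowMul R U X} := by
    ext X
    constructor
    · rintro ⟨Z, ⟨hZ, -⟩, rfl⟩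
      rwa [append_neg_rowMul] at hZ
    · intro hX
      obtain ⟨Z, hZ, rfl⟩ := exists_nonneg_diffHalves_eq X
      exact ⟨Z, ⟨(append_neg_rowMul U Z).symm ▸ hX, hZ⟩, rfl⟩
  rw [FinitelyPoPresentedAt, ← hset]
  exact h.image isRightLinear_diffHalves

theorem FinitelyPoPresentedAt.isFGConeIn_nonneg (hU : SpanningRow R U)
    (h : FinitelyPoPresentedAt R U) : IsFGConeIn R {a : A | 0 ≤ a} := by
  have hset : rowMul R U '' {X | 0 ≤ rowMul R U X} = {a : A | 0 ≤ a} := by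
    ext a
    constructor
    · rintro ⟨X, hX, rfl⟩
      exact hX
    · intro ha
      obtain ⟨X, rfl⟩ := hU a
      exact ⟨X, ha, rfl⟩
  exact hset ▸ h.image (isRightLinear_rowMul U)

theorem FinitelyPoPresentedAt.isFGConeIn_ker (hR : RightPoCoherent R)
    (h : FinitelyPoPresentedAt R U) : IsFGConeIn R {X | rowMul R U X = 0} := by
  have := PORightModule.isOrderedAddMonoid R A
  have hset : {X ∈ {X | 0 ≤ rowMul R U X} | -X ∈ {X | 0 ≤ rowMul R U X}} =
      {X | rowMul R U X = 0} := by
    ext X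
    simp only [Set.mem_ofPred_eq, rowMul_neg, neg_nonneg, le_antisymm_iff (a := rowMul R U X),
      and_comm]
  exact hset ▸ h.sep_mem hR h IsRightLinear.id.neg

theorem FinitelyPoPresentedAt.finitelyPresentedModule (hR : RightPoCoherent R)
    (hU : SpanningRow R U) (h : FinitelyPoPresentedAt R U) : FinitelyPresentedModule R A := by
  obtain ⟨k, g, hg⟩ := (h.isFGConeIn_ker hR).exists_eq_span fun X (hX : rowMul R U X = 0) =>
    show rowMul R U (-X) = 0 by rw [rowMul_neg, hX, neg_zero]
  exact ⟨n, U, hU, k, g, hg⟩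

theorem poCoherent_of_finitelyPresentedModule (hR : RightPoCoherent R)
    (hfp : FinitelyPresentedModule R A) (hA : IsFGConeIn R {a : A | 0 ≤ a}) :
    PoCoherent R A := by
  obtain ⟨n, U, hU, k, g, hker⟩ := hfp
  obtain ⟨p, c, hc⟩ := hA
  intro m V
  choose B hB using fun i => hU (V i)
  choose C hC using fun j => hU (c j)
  -- `V X ≥ 0` iff `V X = c T` for some `T ≥ 0`, i.e. iff `B X - C T` is a relation of `U`
  set d : (Fin m → R) × (Fin p → R) → Fin n → R := fun q => rowMul R B q.1 - rowMul R C q.2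
  have hUd : ∀ q, rowMul R U (d q) = rowMul R V q.1 - rowMul R c q.2 := fun q => by
    rw [rowMul_sub, rowMul_rowMul, rowMul_rowMul, ← funext hB, ← funext hC]
  have hset : Prod.fst '' {q ∈ {X : Fin m → R | ∀ i, 0 ≤ X i} ×ˢ {T : Fin p → R | ∀ j, 0 ≤ T j} |
      d q ∈ {X | rowMul R U X = 0}} = {X | 0 ≤ rowMul R V X ∧ ∀ i, 0 ≤ X i} := by
    ext X
    constructor
    · rintro ⟨⟨X, T⟩, ⟨⟨hX, hT⟩, hXT⟩, rfl⟩
      have hVc : rowMul R V X = rowMul R c T := sub_eq_zero.mp ((hUd (X, T)).symm.trans hXT)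
      exact ⟨hVc ▸ (hc ▸ ⟨T, hT, rfl⟩ : rowMul R c T ∈ {a : A | 0 ≤ a}), hX⟩
    · rintro ⟨hVX, hX⟩
      have hVX' : rowMul R V X ∈ {a : A | 0 ≤ a} := hVX
      rw [hc] at hVX'
      obtain ⟨T, hT, hVc⟩ := hVX'
      exact ⟨(X, T), ⟨⟨hX, hT⟩, (hUd (X, T)).trans (sub_eq_zero.mpr hVc)⟩, rfl⟩
  have hd : IsRightLinear R d :=
    ((isRightLinear_rowMul B).comp IsRightLinear.fst).sub
      ((isRightLinear_rowMul C).comp IsRightLinear.snd)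
  rw [FinitelyRelatedAt, ← hset]
  exact (((isFGConeIn_orthant m).prod (isFGConeIn_orthant p)).sep_mem hR
    (hker ▸ isFGConeIn_span g) hd).image IsRightLinear.fst

end Presentations

/-- Let `R` be a right po-coherent po-ring and `A` a partially ordered right
`R`-module.  The following are equivalent: (i) `A` is finitely po-presented; (ii) `A` is
finitely related; (iii) `A` is a finitely presented right `R`-module and
`A⁺ = {a : A | 0 ≤ a}` is a finitely generated right `R⁺`-semimodule. -/
theorem finitelyPoPresented_tfae
    (R A : Type*) [PORing R] [AddCommGroup A] [PartialOrder A] [PORightModule R A]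
    (hR : RightPoCoherent R) :
    (FinitelyPoPresented R A ↔ FinitelyRelatedMod R A) ∧
    (FinitelyPoPresented R A ↔
      (FinitelyPresentedModule R A ∧ IsFGConeIn R {a : A | 0 ≤ a})) := by
  have i_iii : FinitelyPoPresented R A →
      FinitelyPresentedModule R A ∧ IsFGConeIn R {a : A | 0 ≤ a} :=
    fun ⟨_, _, hU, h⟩ => ⟨h.finitelyPresentedModule hR hU, h.isFGConeIn_nonneg hU⟩
  have iii_ii : FinitelyPresentedModule R A ∧ IsFGConeIn R {a : A | 0 ≤ a} →
      FinitelyRelatedMod R A := fun ⟨hfp, hA⟩ =>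
    ⟨let ⟨n, U, hU, _⟩ := hfp; ⟨n, U, hU⟩,
      fun n U _ => poCoherent_of_finitelyPresentedModule hR hfp hA n U⟩
  have ii_i : FinitelyRelatedMod R A → FinitelyPoPresented R A :=
    fun ⟨⟨n, U, hU⟩, hrel⟩ =>
      ⟨n, U, hU, (hrel _ _ hU.append_neg).finitelyPoPresentedAt_of_append_neg⟩
  exact ⟨⟨iii_ii ∘ i_iii, ii_i⟩, ⟨i_iii, ii_i ∘ iii_ii⟩⟩
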